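/- arXiv:1203.1806 — 5 statements merged into one kernel-verified Lean document; each statement's English description precedes it below -/
import Mathlib

section
/- Let P ⊇ Q be a unital inclusion of von Neumann algebras with a faithful normal conditional expectation E_Q : P → Q. If z is a nonzero central projection of Q such that zP = Qz (as sets), then z is central in P and Qz is a direct summand of P. -/
open scoped ComplexOrder

variable {H : Type*} [NormedAddCommGroup H] [InnerProductSpace ℂ H] [CompleteSpace H]

/-- A faithful normal conditional expectation from the (carrier of the) von Neumann
algebra `P` onto its subalgebra `Q`: a positive, `Q`-bimodular, star-preserving,
linear idempotent projection of `P` onto `Q` which is faithful. -/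
def IsCondExp (P Q : Set (H →L[ℂ] H)) (E : (H →L[ℂ] H) → (H →L[ℂ] H)) : Prop :=
  Q ⊆ P ∧ (∀ x ∈ P, E x ∈ Q) ∧ (∀ y ∈ Q, E y = y) ∧
  (∀ x y, E (x + y) = E x + E y) ∧ (∀ (c : ℂ) (x : H →L[ℂ] H), E (c • x) = c • E x) ∧
  (∀ x, E (star x) = star (E x)) ∧ (∀ x, 0 ≤ x → 0 ≤ E x) ∧
  (∀ a ∈ Q, ∀ (x : H →L[ℂ] H), ∀ b ∈ Q, E (a * x * b) = a * E x * b) ∧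
  (∀ x ∈ P, E (star x * x) = 0 → x = 0)

/-- `p` is an (orthogonal) projection belonging to `P`. -/
def IsProjectionIn (P : Set (H →L[ℂ] H)) (p : H →L[ℂ] H) : Prop :=
  p ∈ P ∧ IsIdempotentElem p ∧ IsSelfAdjoint p

/-- σ-finiteness of a von Neumann algebra, expressed through the existence of a
faithful (normal) state. -/
def IsSigmaFinite (P : Set (H →L[ℂ] H)) : Prop :=
  ∃ φ : (H →L[ℂ] H) →ₗ[ℂ] ℂ, φ 1 = 1 ∧ (∀ x, 0 ≤ x → 0 ≤ φ x) ∧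
    (∀ x ∈ P, φ (star x * x) = 0 → x = 0)

/-! `zP ⊆ Qz` forces `zxz = zx` for every `x ∈ P`; since `P` is self-adjoint, the same holds
for `x⋆`, and taking adjoints gives `zxz = xz`. So `z` commutes with `P`, whence `Pz = zP = Qz`. -/

theorem IsIdempotentElem.mul_mul_self_of_mul_eq {R : Type*} [Semigroup R] {z x y : R}
    (hz : IsIdempotentElem z) (h : z * x = y * z) : z * x * z = z * x := by
  rw [h, mul_assoc, hz.eq]

theorem IsSelfAdjoint.commute_of_mul_mul_self {R : Type*} [Monoid R] [StarMul R] {z x : R}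
    (hz : IsSelfAdjoint z) (hx : z * x * z = z * x) (hx_star : z * star x * z = z * star x) :
    Commute z x := by
  have hxz : z * x * z = x * z := by
    simpa only [star_mul, star_star, hz.star_eq, mul_assoc] using congrArg star hx_star
  exact hx.symm.trans hxz

theorem stmt0_general (P Q : VonNeumannAlgebra H)
    (z : H →L[ℂ] H) (hz : IsProjectionIn (Q : Set (H →L[ℂ] H)) z)
    (hzP : {w | ∃ x ∈ P, w = z * x} = {w | ∃ y ∈ Q, w = y * z}) :
    (∀ x ∈ P, z * x = x * z) ∧
      {w | ∃ x ∈ P, w = x * z} = {w | ∃ y ∈ Q, w = y * z} := by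
  obtain ⟨-, hz_idem, hz_sa⟩ := hz
  have hcorner : ∀ x ∈ P, z * x * z = z * x := fun x hx => by
    obtain ⟨y, -, hy⟩ : z * x ∈ {w | ∃ y ∈ Q, w = y * z} := hzP ▸ ⟨x, hx, rfl⟩
    exact hz_idem.mul_mul_self_of_mul_eq hy
  have hcomm : ∀ x ∈ P, z * x = x * z := fun x hx =>
    hz_sa.commute_of_mul_mul_self (hcorner x hx) (hcorner _ (star_mem hx))
  refine ⟨hcomm, ?_⟩
  rw [← hzP]
  exact Set.ext fun w => exists_congr fun x => and_congr_right fun hx => by rw [hcomm x hx]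

/-- if `z` is a nonzero central projection of `Q` with `zP = Qz` (as sets),
then `z` is central in `P` and `Qz` is a direct summand of `P` (i.e. `Pz = Qz`). -/
theorem stmt0 (P Q : VonNeumannAlgebra H) (E : (H →L[ℂ] H) → (H →L[ℂ] H))
    (hE : IsCondExp (P : Set (H →L[ℂ] H)) (Q : Set (H →L[ℂ] H)) E)
    (z : H →L[ℂ] H) (hz : IsProjectionIn (Q : Set (H →L[ℂ] H)) z)
    (hzQcentral : ∀ y ∈ Q, z * y = y * z) (hz0 : z ≠ 0)
    (hzP : {w | ∃ x ∈ P, w = z * x} = {w | ∃ y ∈ Q, w = y * z}) :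
    (∀ x ∈ P, z * x = x * z) ∧
      {w | ∃ x ∈ P, w = x * z} = {w | ∃ y ∈ Q, w = y * z} :=
  stmt0_general P Q z hz hzP
end

section
/- Let P ⊇ Q be a unital inclusion of von Neumann algebras with a faithful normal conditional expectation E_Q : P → Q. If Pe = Qe for some nonzero projection e ∈ Q, then there exists a nonzero central projection z of Q with Pz = Qz. Consequently, the inclusion P ⊇ Q is entirely non-trivial (no nonzero direct summand of Q is a direct summand of P) if and only if Pe ≠ Qe for every nonzero projection e ∈ Q. -/
open scoped ComplexOrder

variable {H : Type*} [NormedAddCommGroup H] [InnerProductSpace ℂ H] [CompleteSpace H]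

/-- An inclusion `P ⊇ Q` is entirely non-trivial if `Pz ≠ Qz` for every nonzero
central projection `z` of `Q`. -/
def EntirelyNonTrivialCentral (P Q : Set (H →L[ℂ] H)) : Prop :=
  ∀ z : H →L[ℂ] H, IsProjectionIn Q z → (∀ y ∈ Q, z * y = y * z) → z ≠ 0 →
    {w | ∃ x ∈ P, w = x * z} ≠ {w | ∃ y ∈ Q, w = y * z}

/-!
Let `z` be the projection onto `[Q e H]`, the central support of `e`. This subspace is invariant
under `Q` and under `Q'`, so by the double commutant theorem `z` lies in `Q ∩ Q'`, and `z ≠ 0`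
since `z e = e`. If `P e = Q e`, then for `x ∈ P` and `a ∈ Q` we have `x a e = b e` with `b ∈ Q`;
hence `x` commutes with `Q'` on `[Q e H]`, so `x z ∈ Q'' = Q` and `P z = Q z`. The
characterisation of entire non-triviality follows because central projections are projections.
-/

theorem setOf_mul_eq_of_mul_mem {M : Type*} [Semigroup M] {P Q : Set M} {z : M} (hQP : Q ⊆ P)
    (hz : IsIdempotentElem z) (h : ∀ x ∈ P, x * z ∈ Q) :
    {w | ∃ x ∈ P, w = x * z} = {w | ∃ y ∈ Q, w = y * z} := by
  ext w
  constructor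
  · rintro ⟨x, hx, rfl⟩
    exact ⟨x * z, h x hx, by rw [mul_assoc, hz.eq]⟩
  · rintro ⟨y, hy, rfl⟩
    exact ⟨y, hQP hy, rfl⟩

namespace VonNeumannAlgebra

variable (Q : VonNeumannAlgebra H) (e : H →L[ℂ] H)

def centralSupportSpace : Submodule ℂ H :=
  (Submodule.span ℂ {v | ∃ a ∈ Q, ∃ η, a (e η) = v}).topologicalClosure

instance : (Q.centralSupportSpace e).HasOrthogonalProjection := by
  unfold centralSupportSpace; infer_instance

/-- The central support of `e` in `Q`, i.e. the least central projection of `Q` dominating `e`,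
is the projection onto `[Q e H]`. -/
noncomputable def centralSupport : H →L[ℂ] H :=
  (Q.centralSupportSpace e).starProjection

theorem isStarProjection_centralSupport : IsStarProjection (Q.centralSupport e) :=
  isStarProjection_starProjection

variable {Q e}

theorem apply_mem_centralSupportSpace {a : H →L[ℂ] H} (ha : a ∈ Q) (η : H) :
    a (e η) ∈ Q.centralSupportSpace e :=
  Submodule.le_topologicalClosure _ (Submodule.subset_span ⟨a, ha, η, rfl⟩)

theorem centralSupportSpace_mem_invtSubmodule {T : H →L[ℂ] H}
    (hT : ∀ a ∈ Q, ∃ b ∈ Q, ∀ η, ∃ ξ, T (a (e η)) = b (e ξ)) :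
    Q.centralSupportSpace e ∈ Module.End.invtSubmodule T.toLinearMap := by
  refine Submodule.topologicalClosure_mem_invtSubmodule ?_
  rw [Module.End.mem_invtSubmodule, Submodule.span_le]
  rintro _ ⟨a, ha, η, rfl⟩
  obtain ⟨b, hb, hab⟩ := hT a ha
  obtain ⟨ξ, hξ⟩ := hab η
  exact Submodule.subset_span ⟨b, hb, ξ, hξ.symm⟩

theorem apply_apply_comm_of_mem_commutant {t c : H →L[ℂ] H} (ht : t ∈ Q.commutant) (hc : c ∈ Q)
    (η : H) : t (c η) = c (t η) :=
  DFunLike.congr_fun (mem_commutant_iff.mp ht c hc).symm η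

theorem centralSupport_mem (he : e ∈ Q) : Q.centralSupport e ∈ Q := by
  refine (IsStarProjection.mem_iff (isStarProjection_centralSupport Q e) Q).mpr fun t ht ↦ ?_
  rw [centralSupport, Submodule.range_starProjection]
  exact centralSupportSpace_mem_invtSubmodule fun a ha ↦ ⟨a, ha, fun η ↦
    ⟨t η, apply_apply_comm_of_mem_commutant ht (mul_mem ha he) η⟩⟩

theorem centralSupport_mem_commutant : Q.centralSupport e ∈ Q.commutant := by
  refine (IsStarProjection.mem_iff (isStarProjection_centralSupport Q e) Q.commutant).mpr
    fun y hy ↦ ?_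
  rw [commutant_commutant] at hy
  rw [centralSupport, Submodule.range_starProjection]
  exact centralSupportSpace_mem_invtSubmodule fun a ha ↦ ⟨y * a, mul_mem hy ha, fun η ↦ ⟨η, rfl⟩⟩

variable (Q e) in
theorem centralSupport_mul_self : Q.centralSupport e * e = e := by
  ext η
  have hη : e η ∈ Q.centralSupportSpace e := by
    simpa using apply_mem_centralSupportSpace (one_mem Q) η
  exact Submodule.starProjection_eq_self_iff.mpr hη

theorem centralSupport_ne_zero (he : e ≠ 0) : Q.centralSupport e ≠ 0 := by
  intro h
  apply he
  rw [← centralSupport_mul_self Q e, h, zero_mul]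

theorem mul_centralSupport_mem {x : H →L[ℂ] H} (he : e ∈ Q)
    (hx : ∀ a ∈ Q, ∃ b ∈ Q, x * a * e = b * e) : x * Q.centralSupport e ∈ Q := by
  suffices x * Q.centralSupport e ∈ Q.commutant.commutant by rwa [commutant_commutant] at this
  refine mem_commutant_iff.mpr fun t ht ↦ ?_
  have hxt : Set.EqOn (t * x) (x * t) (Q.centralSupportSpace e) := by
    rw [centralSupportSpace, Submodule.topologicalClosure_coe]
    refine ContinuousLinearMap.eqOn_closure_span ?_
    rintro _ ⟨a, ha, η, rfl⟩
    obtain ⟨b, hb, hxa⟩ := hx a ha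
    have hxa' (ξ : H) : x (a (e ξ)) = b (e ξ) := congr($hxa ξ)
    calc t (x (a (e η))) = t (b (e η)) := by rw [hxa']
      _ = b (e (t η)) := apply_apply_comm_of_mem_commutant ht (mul_mem hb he) η
      _ = x (a (e (t η))) := (hxa' _).symm
      _ = x (t (a (e η))) :=
          congr_arg x (apply_apply_comm_of_mem_commutant ht (mul_mem ha he) η).symm
  ext v
  show t (x (Q.centralSupport e v)) = x (Q.centralSupport e (t v))
  calc t (x (Q.centralSupport e v)) = x (t (Q.centralSupport e v)) :=
        hxt (Submodule.starProjection_apply_mem _ v)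
    _ = x (Q.centralSupport e (t v)) := by
        rw [apply_apply_comm_of_mem_commutant ht (centralSupport_mem he)]

theorem exists_central_projection_mul_eq {P : VonNeumannAlgebra H} (hQP : Q ≤ P) (he : e ∈ Q)
    (hne : e ≠ 0) (hPe : {w | ∃ x ∈ P, w = x * e} = {w | ∃ y ∈ Q, w = y * e}) :
    ∃ z : H →L[ℂ] H, IsProjectionIn (Q : Set (H →L[ℂ] H)) z ∧
      (∀ y ∈ Q, z * y = y * z) ∧ z ≠ 0 ∧
      {w | ∃ x ∈ P, w = x * z} = {w | ∃ y ∈ Q, w = y * z} := by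
  have hz := isStarProjection_centralSupport Q e
  refine ⟨Q.centralSupport e, ⟨centralSupport_mem he, hz.isIdempotentElem, hz.isSelfAdjoint⟩,
    fun y hy ↦ (mem_commutant_iff.mp centralSupport_mem_commutant y hy).symm,
    centralSupport_ne_zero hne, setOf_mul_eq_of_mul_mem hQP hz.isIdempotentElem fun x hx ↦ ?_⟩
  refine mul_centralSupport_mem he fun a ha ↦ ?_
  have hxae : x * a * e ∈ {w | ∃ x ∈ P, w = x * e} := ⟨x * a, mul_mem hx (hQP ha), rfl⟩
  obtain ⟨b, hb, hxab⟩ : x * a * e ∈ {w | ∃ y ∈ Q, w = y * e} := hPe ▸ hxae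
  exact ⟨b, hb, hxab⟩

end VonNeumannAlgebra

/-- if `Pe = Qe` for some nonzero projection `e ∈ Q` then `Pz = Qz` for some
nonzero central projection `z` of `Q`; consequently `P ⊇ Q` is entirely non-trivial iff
`Pe ≠ Qe` for every nonzero projection `e ∈ Q`. -/
theorem stmt1 (P Q : VonNeumannAlgebra H) (E : (H →L[ℂ] H) → (H →L[ℂ] H))
    (hE : IsCondExp (P : Set (H →L[ℂ] H)) (Q : Set (H →L[ℂ] H)) E) :
    (∀ e : H →L[ℂ] H, IsProjectionIn (Q : Set (H →L[ℂ] H)) e → e ≠ 0 →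
      {w | ∃ x ∈ P, w = x * e} = {w | ∃ y ∈ Q, w = y * e} →
      ∃ z : H →L[ℂ] H, IsProjectionIn (Q : Set (H →L[ℂ] H)) z ∧
        (∀ y ∈ Q, z * y = y * z) ∧ z ≠ 0 ∧
        {w | ∃ x ∈ P, w = x * z} = {w | ∃ y ∈ Q, w = y * z}) ∧
    (EntirelyNonTrivialCentral (P : Set (H →L[ℂ] H)) (Q : Set (H →L[ℂ] H)) ↔
      ∀ e : H →L[ℂ] H, IsProjectionIn (Q : Set (H →L[ℂ] H)) e → e ≠ 0 →
        {w | ∃ x ∈ P, w = x * e} ≠ {w | ∃ y ∈ Q, w = y * e}) := by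
  have central e (he : IsProjectionIn (Q : Set (H →L[ℂ] H)) e) hne hPe :=
    VonNeumannAlgebra.exists_central_projection_mul_eq hE.1 he.1 hne hPe
  refine ⟨central, fun hENT e he hne hPe ↦ ?_, fun h z hz _ hne ↦ h z hz hne⟩
  obtain ⟨z, hz, hzc, hzne, hPz⟩ := central e he hne hPe
  exact hENT z hz hzc hzne hPz
end

section
/- Let (P, F) = (P₁, F₁) ⋆_Q (P₂, F₂) be an amalgamated free product of von Neumann algebras over Q with faithful normal conditional expectations. If f ∈ Q is a projection with central support c_f^Q = 1 in Q, then (fPf, F|_{fPf}) is canonically the amalgamated free product (fP₁f, F₁|_{fP₁f}) ⋆_{fQf} (fP₂f, F₂|_{fP₂f}). -/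
/-!
Compression by `f` preserves the axioms of a conditional expectation, and the restriction and
freeness conditions pass to corners because `f Pᵢ f ⊆ Pᵢ`; the content is generation. Let `R` be
a von Neumann algebra containing `f P₁ f` and `f P₂ f`, and let `S` be the set of `z` with
`f a z b f ∈ R` for all `a b ∈ Q`. It contains `P₁ ∪ P₂`, is self-adjoint, and is closed under
products: one may insert `c f d` (`c d ∈ Q`) between the two factors, because central support
`1` puts `1` in the strong closure of the span of such elements. Hence `P ⊆ S''`, and von
Neumann's double commutant argument, run on `H ⊕ H` to control the two vectors `v` and `r v`
at once, gives `f x f ∈ R` for every `x ∈ S''`.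
-/

open scoped ComplexOrder

variable {H : Type*} [NormedAddCommGroup H] [InnerProductSpace ℂ H] [CompleteSpace H]

/-- `(P, F) = (P₁, F₁) ⋆_Q (P₂, F₂)`: an amalgamated free product of von Neumann
algebras over `Q`, phrased for the carriers. `P` is generated by `P₁ ∪ P₂` (any von
Neumann algebra containing `P₁` and `P₂` contains `P`), the faithful normal conditional
expectation `F : P → Q` restricts to `F₁`, `F₂` on `P₁`, `P₂`, and `F` vanishes on
every alternating word in `Ker F₁ ∩ P₁` and `Ker F₂ ∩ P₂`. -/
def IsAFP (P P₁ P₂ Q : Set (H →L[ℂ] H)) (F F₁ F₂ : (H →L[ℂ] H) → (H →L[ℂ] H)) : Prop :=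
  Q ⊆ P₁ ∧ Q ⊆ P₂ ∧ P₁ ⊆ P ∧ P₂ ⊆ P ∧
  (∀ R : VonNeumannAlgebra H, P₁ ⊆ (R : Set (H →L[ℂ] H)) →
    P₂ ⊆ (R : Set (H →L[ℂ] H)) → P ⊆ (R : Set (H →L[ℂ] H))) ∧
  IsCondExp P Q F ∧ IsCondExp P₁ Q F₁ ∧ IsCondExp P₂ Q F₂ ∧
  (∀ x ∈ P₁, F x = F₁ x) ∧ (∀ x ∈ P₂, F x = F₂ x) ∧
  (∀ (n : ℕ) (x : Fin n → (H →L[ℂ] H)) (ε : Fin n → Bool), n ≠ 0 →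
    (∀ i, x i ∈ (if ε i then P₁ else P₂) ∧ F (x i) = 0) →
    (∀ (i : ℕ) (h : i + 1 < n), ε ⟨i, Nat.lt_of_succ_lt h⟩ ≠ ε ⟨i + 1, h⟩) →
    F (List.ofFn x).prod = 0)

/-- `M₂ ⊇ N` is entirely non-trivial: `M₂ e ≠ N e` for every nonzero projection
`e ∈ N`. -/
def EntirelyNonTrivial (P Q : Set (H →L[ℂ] H)) : Prop :=
  ∀ e : H →L[ℂ] H, IsProjectionIn Q e → e ≠ 0 →
    {w | ∃ x ∈ P, w = x * e} ≠ {w | ∃ y ∈ Q, w = y * e}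

/-- The corner `fSf`. -/
def cornerSet (f : H →L[ℂ] H) (S : Set (H →L[ℂ] H)) : Set (H →L[ℂ] H) :=
  {w | ∃ x ∈ S, w = f * x * f}

open Module.End

section CyclicSubspace

variable {E : Type*} [NormedAddCommGroup E] [InnerProductSpace ℂ E]

def cyclicSubspace (S : Set (E →L[ℂ] E)) (u : E) : Submodule ℂ E :=
  (Submodule.span ℂ ((fun a => a u) '' S)).topologicalClosure

variable {S : Set (E →L[ℂ] E)}

theorem apply_mem_cyclicSubspace {a : E →L[ℂ] E} (ha : a ∈ S) (u : E) :
    a u ∈ cyclicSubspace S u :=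
  Submodule.le_topologicalClosure _ (Submodule.subset_span ⟨a, ha, rfl⟩)

theorem cyclicSubspace_mem_invtSubmodule (hmul : ∀ a ∈ S, ∀ b ∈ S, a * b ∈ S)
    {a : E →L[ℂ] E} (ha : a ∈ S) (u : E) :
    cyclicSubspace S u ∈ invtSubmodule (a : E →ₗ[ℂ] E) := by
  rw [mem_invtSubmodule_iff_map_le]
  refine (Submodule.topologicalClosure_map a _).trans (Submodule.topologicalClosure_mono ?_)
  rw [Submodule.map_span]
  refine Submodule.span_mono ?_
  rintro _ ⟨_, ⟨b, hb, rfl⟩, rfl⟩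
  exact ⟨a * b, hmul a ha b hb, rfl⟩

variable [CompleteSpace E]

theorem Submodule.commute_starProjection_of_mem_invtSubmodule (K : Submodule ℂ E)
    [K.HasOrthogonalProjection] {T : E →L[ℂ] E} (hT : K ∈ invtSubmodule (T : E →ₗ[ℂ] E))
    (hT' : K ∈ invtSubmodule (T.adjoint : E →ₗ[ℂ] E)) : Commute K.starProjection T :=
  (ContinuousLinearMap.IsIdempotentElem.commute_iff K.isIdempotentElem_starProjection).2
    ⟨by rwa [Submodule.range_starProjection], by
      rw [Submodule.ker_starProjection]
      exact ContinuousLinearMap.orthogonal_mem_invtSubmodule hT'⟩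

instance (S : Set (E →L[ℂ] E)) (u : E) : (cyclicSubspace S u).HasOrthogonalProjection := by
  unfold cyclicSubspace; infer_instance

theorem commute_starProjection_cyclicSubspace (hmul : ∀ a ∈ S, ∀ b ∈ S, a * b ∈ S)
    (hstar : ∀ a ∈ S, star a ∈ S) {a : E →L[ℂ] E} (ha : a ∈ S) (u : E) :
    Commute (cyclicSubspace S u).starProjection a :=
  Submodule.commute_starProjection_of_mem_invtSubmodule _
    (cyclicSubspace_mem_invtSubmodule hmul ha u)
    (by rw [← ContinuousLinearMap.star_eq_adjoint]
        exact cyclicSubspace_mem_invtSubmodule hmul (hstar a ha) u)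

/-- The component of `u` orthogonal to `cyclicSubspace S u` is annihilated by `S`. -/
theorem mem_cyclicSubspace_self (hmul : ∀ a ∈ S, ∀ b ∈ S, a * b ∈ S)
    (hstar : ∀ a ∈ S, star a ∈ S) (hS : ∀ w, (∀ a ∈ S, a w = 0) → w = 0) (u : E) :
    u ∈ cyclicSubspace S u := by
  set K := cyclicSubspace S u
  have hperp : u - K.starProjection u = 0 := hS _ fun a ha => by
    rw [map_sub, ← mul_apply_eq_comp,
      ← (commute_starProjection_cyclicSubspace hmul hstar ha u).eq, mul_apply_eq_comp,
      Submodule.starProjection_eq_self_iff.2 (apply_mem_cyclicSubspace ha u), sub_self]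
  rw [sub_eq_zero.1 hperp]
  exact K.starProjection_apply_mem u

end CyclicSubspace

@[ext] theorem WithLp.prod_ext {p : ENNReal} {α β : Type*} {u w : WithLp p (α × β)}
    (h₁ : u.fst = w.fst) (h₂ : u.snd = w.snd) : u = w :=
  WithLp.ofLp_injective p (Prod.ext h₁ h₂)

noncomputable def diagOp : (H →L[ℂ] H) →⋆ₐ[ℂ] (WithLp 2 (H × H) →L[ℂ] WithLp 2 (H × H)) where
  toFun x := (WithLp.prodContinuousLinearEquiv 2 ℂ H H).symm.toContinuousLinearMap ∘L
    (x.prodMap x) ∘L (WithLp.prodContinuousLinearEquiv 2 ℂ H H).toContinuousLinearMap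
  map_one' := rfl
  map_mul' _ _ := rfl
  map_zero' := rfl
  map_add' _ _ := rfl
  commutes' _ := rfl
  map_star' x := by
    refine ((ContinuousLinearMap.eq_adjoint_iff _ _).2 fun u w => ?_).trans
      (ContinuousLinearMap.star_eq_adjoint _).symm
    simp [WithLp.prod_inner_apply, ContinuousLinearMap.star_eq_adjoint,
      ContinuousLinearMap.adjoint_inner_left]

@[simp] theorem diagOp_fst (x : H →L[ℂ] H) (u : WithLp 2 (H × H)) :
    (diagOp x u).fst = x u.fst := rfl

@[simp] theorem diagOp_snd (x : H →L[ℂ] H) (u : WithLp 2 (H × H)) :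
    (diagOp x u).snd = x u.snd := rfl

section Amplification

variable {S : Set (H →L[ℂ] H)}

/-- The four matrix entries of `T` lie in the commutant of `S`, hence commute with `x`. -/
theorem commute_diagOp_of_mem_centralizer_centralizer
    {T : WithLp 2 (H × H) →L[ℂ] WithLp 2 (H × H)} (hT : ∀ s ∈ S, Commute T (diagOp s))
    {x : H →L[ℂ] H} (hx : x ∈ S.centralizer.centralizer) : Commute T (diagOp x) := by
  have entry (p : WithLp 2 (H × H) →L[ℂ] H) (ι : H →L[ℂ] WithLp 2 (H × H))
      (hp : ∀ s w, p (diagOp s w) = s (p w)) (hι : ∀ s ξ, diagOp s (ι ξ) = ι (s ξ)) (ξ : H) :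
      p (T (ι (x ξ))) = x (p (T (ι ξ))) := by
    have hmem : p ∘L T ∘L ι ∈ S.centralizer := fun s hs => ContinuousLinearMap.ext fun ζ => by
      change s (p (T (ι ζ))) = p (T (ι (s ζ)))
      rw [← hι, ← hp]
      exact congr(p ($((hT s hs).eq) (ι ζ))).symm
    exact congr($(hx _ hmem) ξ)
  let ι₁ : H →L[ℂ] WithLp 2 (H × H) :=
    (WithLp.prodContinuousLinearEquiv 2 ℂ H H).symm.toContinuousLinearMap ∘L .inl ℂ H H
  let ι₂ : H →L[ℂ] WithLp 2 (H × H) :=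
    (WithLp.prodContinuousLinearEquiv 2 ℂ H H).symm.toContinuousLinearMap ∘L .inr ℂ H H
  have hι₁ (s : H →L[ℂ] H) (ξ : H) : diagOp s (ι₁ ξ) = ι₁ (s ξ) := by ext <;> simp [ι₁]
  have hι₂ (s : H →L[ℂ] H) (ξ : H) : diagOp s (ι₂ ξ) = ι₂ (s ξ) := by ext <;> simp [ι₂]
  have hsplit (w : WithLp 2 (H × H)) : w = ι₁ w.fst + ι₂ w.snd := by ext <;> simp [ι₁, ι₂]
  have h₁₁ := entry (WithLp.fstL 2 ℂ H H) ι₁ (fun _ _ => rfl) hι₁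
  have h₁₂ := entry (WithLp.fstL 2 ℂ H H) ι₂ (fun _ _ => rfl) hι₂
  have h₂₁ := entry (WithLp.sndL 2 ℂ H H) ι₁ (fun _ _ => rfl) hι₁
  have h₂₂ := entry (WithLp.sndL 2 ℂ H H) ι₂ (fun _ _ => rfl) hι₂
  simp only [WithLp.fstL_apply, WithLp.sndL_apply] at h₁₁ h₁₂ h₂₁ h₂₂
  refine ContinuousLinearMap.ext fun w => ?_
  rw [hsplit w]
  ext
  · simp only [mul_apply_eq_comp, map_add, hι₁, hι₂, WithLp.add_fst, diagOp_fst, h₁₁, h₁₂]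
  · simp only [mul_apply_eq_comp, map_add, hι₁, hι₂, WithLp.add_snd, diagOp_snd, h₂₁, h₂₂]

theorem mul_mem_image_diagOp (hmul : ∀ a ∈ S, ∀ b ∈ S, a * b ∈ S) :
    ∀ a ∈ diagOp '' S, ∀ b ∈ diagOp '' S, a * b ∈ diagOp '' S := by
  rintro _ ⟨a, ha, rfl⟩ _ ⟨b, hb, rfl⟩
  exact ⟨a * b, hmul a ha b hb, map_mul _ _ _⟩

theorem star_mem_image_diagOp (hstar : ∀ a ∈ S, star a ∈ S) :
    ∀ a ∈ diagOp '' S, star a ∈ diagOp '' S := by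
  rintro _ ⟨a, ha, rfl⟩
  exact ⟨star a, hstar a ha, map_star _ _⟩

/-- Von Neumann's double commutant argument, for pairs of vectors. -/
theorem diagOp_mem_cyclicSubspace_of_mem_centralizer_centralizer
    (hmul : ∀ a ∈ S, ∀ b ∈ S, a * b ∈ S) (hstar : ∀ a ∈ S, star a ∈ S) (hone : 1 ∈ S)
    {x : H →L[ℂ] H} (hx : x ∈ S.centralizer.centralizer) (u : WithLp 2 (H × H)) :
    diagOp x u ∈ cyclicSubspace (diagOp '' S) u := by
  set K := cyclicSubspace (diagOp '' S) u
  have hu : u ∈ K := by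
    simpa using apply_mem_cyclicSubspace (Set.mem_image_of_mem diagOp hone) u
  have hcomm : Commute K.starProjection (diagOp x) :=
    commute_diagOp_of_mem_centralizer_centralizer (fun s hs =>
      commute_starProjection_cyclicSubspace (mul_mem_image_diagOp hmul)
        (star_mem_image_diagOp hstar) ⟨s, hs, rfl⟩ u) hx
  rw [← Submodule.starProjection_eq_self_iff.2 hu, ← mul_apply_eq_comp, ← hcomm.eq,
    mul_apply_eq_comp]
  exact K.starProjection_apply_mem _

theorem mem_cyclicSubspace_image_diagOp_self (hmul : ∀ a ∈ S, ∀ b ∈ S, a * b ∈ S)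
    (hstar : ∀ a ∈ S, star a ∈ S) (hS : ∀ w, (∀ a ∈ S, a w = 0) → w = 0)
    (u : WithLp 2 (H × H)) : u ∈ cyclicSubspace (diagOp '' S) u := by
  refine mem_cyclicSubspace_self (mul_mem_image_diagOp hmul) (star_mem_image_diagOp hstar)
    (fun w hw => ?_) u
  have hw' (s : H →L[ℂ] H) (hs : s ∈ S) := hw _ ⟨s, hs, rfl⟩
  ext
  · exact hS _ fun s hs => by simpa using congr(($(hw' s hs)).fst)
  · exact hS _ fun s hs => by simpa using congr(($(hw' s hs)).snd)

/-- An `r ∈ R'` commutes with `L * x * M`: test on the pair `(M v, M (r v))`. -/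
theorem mul_mul_mem_of_diagOp_mem_cyclicSubspace (R : VonNeumannAlgebra H)
    {L M x : H →L[ℂ] H} (hS : ∀ s ∈ S, L * s * M ∈ R)
    (hx : ∀ u, diagOp x u ∈ cyclicSubspace (diagOp '' S) u) : L * x * M ∈ R := by
  rw [← SetLike.mem_coe, ← R.centralizer_centralizer]
  intro r hr
  refine ContinuousLinearMap.ext fun v => ?_
  let u : WithLp 2 (H × H) := WithLp.toLp 2 (M v, M (r v))
  let Φ : WithLp 2 (H × H) →L[ℂ] H :=
    r ∘L L ∘L WithLp.fstL 2 ℂ H H - L ∘L WithLp.sndL 2 ℂ H H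
  have hker : cyclicSubspace (diagOp '' S) u ≤ LinearMap.ker (Φ : WithLp 2 (H × H) →ₗ[ℂ] H) := by
    refine Submodule.topologicalClosure_minimal _ (Submodule.span_le.2 ?_) Φ.isClosed_ker
    rintro _ ⟨_, ⟨s, hs, rfl⟩, rfl⟩
    have := congr($(hr _ (hS s hs)) v)
    simp only [mul_apply_eq_comp] at this
    simp [Φ, u, this]
  have := hker (hx u)
  simp only [LinearMap.mem_ker] at this
  simpa [Φ, u, sub_eq_zero] using this

end Amplification

theorem VonNeumannAlgebra.starProjection_mem {S : VonNeumannAlgebra H} {K : Submodule ℂ H}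
    [K.HasOrthogonalProjection] (hK : ∀ y ∈ S.commutant, K ∈ invtSubmodule (y : H →ₗ[ℂ] H)) :
    K.starProjection ∈ S :=
  (VonNeumannAlgebra.IsStarProjection.mem_iff isStarProjection_starProjection S).2 <| by
    simpa only [Submodule.range_starProjection] using hK

/-- The vectors killed by all `f * q` form a subspace `N` invariant under `Q` and `Q'`, so the
projection onto `Nᗮ` is central in `Q`; it satisfies `f * z = f`. -/
theorem eq_zero_of_forall_mul_apply_eq_zero (Q : VonNeumannAlgebra H) {f : H →L[ℂ] H}
    (hf : IsProjectionIn (Q : Set (H →L[ℂ] H)) f)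
    (hcf : ∀ z : H →L[ℂ] H, IsProjectionIn (Q : Set (H →L[ℂ] H)) z →
      (∀ y ∈ Q, z * y = y * z) → f * z = f → z = 1)
    {w : H} (hw : ∀ q ∈ Q, f (q w) = 0) : w = 0 := by
  let N : Submodule ℂ H := ⨅ q ∈ Q, LinearMap.ker ((f * q : H →L[ℂ] H) : H →ₗ[ℂ] H)
  have mem_N {v : H} : v ∈ N ↔ ∀ q ∈ Q, f (q v) = 0 := by simp [N]
  have hN_closed : IsClosed (N : Set H) := by
    simp only [N, Submodule.coe_iInf]
    exact isClosed_iInter fun q => isClosed_iInter fun _ => (f * q).isClosed_ker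
  have : CompleteSpace N := hN_closed.completeSpace_coe
  have invt_of_mem {y : H →L[ℂ] H} (hy : y ∈ Q) : N ∈ invtSubmodule (y : H →ₗ[ℂ] H) :=
    (mem_invtSubmodule_iff_forall_mem_of_mem _).2 fun v hv =>
      mem_N.2 fun q hq => mem_N.1 hv (q * y) (mul_mem hq hy)
  have invt_of_mem_commutant {y : H →L[ℂ] H} (hy : y ∈ Q.commutant) :
      N ∈ invtSubmodule (y : H →ₗ[ℂ] H) :=
    (mem_invtSubmodule_iff_forall_mem_of_mem _).2 fun v hv => mem_N.2 fun q hq => by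
      have hcomm := VonNeumannAlgebra.mem_commutant_iff.1 hy _ (mul_mem hf.1 hq)
      simpa [mem_N.1 hv q hq] using congr($hcomm v)
  have orth_invt {y : H →L[ℂ] H}
      (hy : N ∈ invtSubmodule ((star y : H →L[ℂ] H) : H →ₗ[ℂ] H)) :
      Nᗮ ∈ invtSubmodule (y : H →ₗ[ℂ] H) :=
    ContinuousLinearMap.orthogonal_mem_invtSubmodule <| by
      rwa [← ContinuousLinearMap.star_eq_adjoint]
  set z := Nᗮ.starProjection
  have hzQ : z ∈ Q := VonNeumannAlgebra.starProjection_mem fun y hy =>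
    orth_invt (invt_of_mem_commutant (star_mem hy))
  have hz_central : z ∈ Q.commutant := VonNeumannAlgebra.starProjection_mem fun y hy =>
    orth_invt (invt_of_mem (by simpa using star_mem hy))
  have hfz : f * z = f := ContinuousLinearMap.ext fun v => by
    have hv := Submodule.starProjection_add_starProjection_orthogonal (K := N) v
    have hfN : f (N.starProjection v) = 0 := by
      simpa using mem_N.1 (N.starProjection_apply_mem v) 1 (one_mem Q)
    conv_rhs => rw [← hv]
    rw [map_add, hfN, zero_add]
    rfl
  have hz1 : z = 1 :=
    hcf z ⟨hzQ, Nᗮ.isIdempotentElem_starProjection, isSelfAdjoint_starProjection _⟩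
      (fun y hy => (VonNeumannAlgebra.mem_commutant_iff.1 hz_central y hy).symm) hfz
  have hzw : z w = 0 :=
    Nᗮ.starProjection_apply_eq_zero_iff.2 (N.le_orthogonal_orthogonal (mem_N.2 hw))
  rwa [hz1, one_apply_eq_self] at hzw

def VonNeumannAlgebra.bicommutant (s : Set (H →L[ℂ] H)) (hs : ∀ a ∈ s, star a ∈ s) :
    VonNeumannAlgebra H where
  carrier := s.centralizer.centralizer
  mul_mem' := Set.mul_mem_centralizer
  add_mem' := Set.add_mem_centralizer
  algebraMap_mem' c _ _ := (Algebra.commutes c _).symm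
  star_mem' := Set.star_mem_centralizer' fun _ => Set.star_mem_centralizer' hs
  centralizer_centralizer' := Set.centralizer_centralizer_centralizer _

def compressionPreimage (Q R : VonNeumannAlgebra H) (f : H →L[ℂ] H) : Set (H →L[ℂ] H) :=
  {z | ∀ a ∈ Q, ∀ b ∈ Q, f * a * z * b * f ∈ R}

section CompressionPreimage

variable {Q R : VonNeumannAlgebra H} {f : H →L[ℂ] H}

theorem star_mem_compressionPreimage (hf : IsSelfAdjoint f) :
    ∀ z ∈ compressionPreimage Q R f, star z ∈ compressionPreimage Q R f := by
  intro z hz a ha b hb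
  have h := star_mem (hz (star b) (star_mem hb) (star a) (star_mem ha))
  simpa only [star_mul, star_star, hf.star_eq, mul_assoc] using h

theorem mul_mem_compressionPreimage (hf : IsProjectionIn (Q : Set (H →L[ℂ] H)) f)
    (hcf : ∀ z : H →L[ℂ] H, IsProjectionIn (Q : Set (H →L[ℂ] H)) z →
      (∀ y ∈ Q, z * y = y * z) → f * z = f → z = 1) :
    ∀ x ∈ compressionPreimage Q R f, ∀ y ∈ compressionPreimage Q R f,
      x * y ∈ compressionPreimage Q R f := by
  intro x hx y hy a ha b hb
  let G : Set (H →L[ℂ] H) := {g | ∃ c ∈ Q, ∃ d ∈ Q, g = c * f * d}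
  have hGmul : ∀ g ∈ G, ∀ g' ∈ G, g * g' ∈ G := by
    rintro _ ⟨c, hc, d, hd, rfl⟩ _ ⟨c', hc', d', hd', rfl⟩
    exact ⟨c * f * d * c', mul_mem (mul_mem (mul_mem hc hf.1) hd) hc', d', hd', by
      simp only [mul_assoc]⟩
  have hGstar : ∀ g ∈ G, star g ∈ G := by
    rintro _ ⟨c, hc, d, hd, rfl⟩
    exact ⟨star d, star_mem hd, star c, star_mem hc, by
      simp only [star_mul, hf.2.2.star_eq, mul_assoc]⟩
  have hG : ∀ w, (∀ g ∈ G, g w = 0) → w = 0 := fun w hw =>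
    eq_zero_of_forall_mul_apply_eq_zero Q hf hcf fun q hq => by
      simpa using hw (1 * f * q) ⟨1, one_mem Q, q, hq, rfl⟩
  have hff (X : H →L[ℂ] H) : f * (f * X) = f * X := by rw [← mul_assoc, hf.2.1.eq]
  have hLGM : ∀ g ∈ G, f * a * x * g * (y * b * f) ∈ R := by
    rintro _ ⟨c, hc, d, hd, rfl⟩
    have h := mul_mem (hx a ha c hc) (hy d hd b hb)
    simp only [mul_assoc, hff] at h ⊢
    exact h
  have h := mul_mul_mem_of_diagOp_mem_cyclicSubspace R hLGM (x := 1) fun u => by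
    simpa using mem_cyclicSubspace_image_diagOp_self hGmul hGstar hG u
  simpa only [mul_one, mul_assoc] using h

end CompressionPreimage

theorem cornerSet_subset_of_cornerSet_subset {P P₁ P₂ Q : VonNeumannAlgebra H}
    (hQ₁ : (Q : Set (H →L[ℂ] H)) ⊆ P₁) (hQ₂ : (Q : Set (H →L[ℂ] H)) ⊆ P₂)
    (hgen : ∀ R : VonNeumannAlgebra H, (P₁ : Set (H →L[ℂ] H)) ⊆ R →
      (P₂ : Set (H →L[ℂ] H)) ⊆ R → (P : Set (H →L[ℂ] H)) ⊆ R)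
    {f : H →L[ℂ] H} (hf : IsProjectionIn (Q : Set (H →L[ℂ] H)) f)
    (hcf : ∀ z : H →L[ℂ] H, IsProjectionIn (Q : Set (H →L[ℂ] H)) z →
      (∀ y ∈ Q, z * y = y * z) → f * z = f → z = 1)
    {R : VonNeumannAlgebra H} (h₁ : cornerSet f P₁ ⊆ R) (h₂ : cornerSet f P₂ ⊆ R) :
    cornerSet f P ⊆ R := by
  set S := compressionPreimage Q R f
  have subset_S {W : VonNeumannAlgebra H} (hQW : (Q : Set (H →L[ℂ] H)) ⊆ W)
      (hW : cornerSet f W ⊆ R) : (W : Set (H →L[ℂ] H)) ⊆ S := fun z hz a ha b hb =>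
    hW ⟨a * z * b, mul_mem (mul_mem (hQW ha) hz) (hQW hb), by simp only [mul_assoc]⟩
  have hstar := star_mem_compressionPreimage (Q := Q) (R := R) hf.2.2
  have hP : (P : Set (H →L[ℂ] H)) ⊆ VonNeumannAlgebra.bicommutant S hstar :=
    hgen _ ((subset_S hQ₁ h₁).trans Set.subset_centralizer_centralizer)
      ((subset_S hQ₂ h₂).trans Set.subset_centralizer_centralizer)
  rintro _ ⟨x, hx, rfl⟩
  refine mul_mul_mem_of_diagOp_mem_cyclicSubspace R (S := S)
    (fun s hs => by simpa using hs 1 (one_mem Q) 1 (one_mem Q)) fun u => ?_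
  exact diagOp_mem_cyclicSubspace_of_mem_centralizer_centralizer
    (mul_mem_compressionPreimage hf hcf) hstar (subset_S hQ₁ h₁ (one_mem P₁)) (hP hx) u

omit [CompleteSpace H] in
theorem cornerSet_mono {f : H →L[ℂ] H} {S T : Set (H →L[ℂ] H)} (h : S ⊆ T) :
    cornerSet f S ⊆ cornerSet f T := by
  rintro _ ⟨x, hx, rfl⟩
  exact ⟨x, h hx, rfl⟩

theorem cornerSet_subset (W : VonNeumannAlgebra H) {f : H →L[ℂ] H} (hf : f ∈ W) :
    cornerSet f W ⊆ W := by
  rintro _ ⟨x, hx, rfl⟩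
  exact mul_mem (mul_mem hf hx) hf

theorem IsCondExp.cornerSet {P Q : VonNeumannAlgebra H} {E : (H →L[ℂ] H) → (H →L[ℂ] H)}
    (h : IsCondExp P Q E) {f : H →L[ℂ] H} (hf : f ∈ Q) :
    IsCondExp (cornerSet f P) (cornerSet f Q) E := by
  obtain ⟨hQP, hmaps, hfix, hadd, hsmul, hstar, hpos, hbimod, hfaithful⟩ := h
  refine ⟨cornerSet_mono hQP, ?_, ?_, hadd, hsmul, hstar, hpos, ?_, ?_⟩
  · rintro _ ⟨x, hx, rfl⟩
    exact ⟨E x, hmaps x hx, hbimod f hf x f hf⟩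
  · intro y hy
    exact hfix y (cornerSet_subset Q hf hy)
  · intro a ha x b hb
    exact hbimod a (cornerSet_subset Q hf ha) x b (cornerSet_subset Q hf hb)
  · intro x hx
    exact hfaithful x (cornerSet_subset P (hQP hf) hx)

/-- if `f ∈ Q` is a projection with central support `1` in `Q`, then
`(fPf, F|) = (fP₁f, F₁|) ⋆_{fQf} (fP₂f, F₂|)` canonically. -/
theorem stmt10 (P P₁ P₂ Q : VonNeumannAlgebra H) (F F₁ F₂ : (H →L[ℂ] H) → (H →L[ℂ] H))
    (hAFP : IsAFP (P : Set (H →L[ℂ] H)) (P₁ : Set (H →L[ℂ] H)) (P₂ : Set (H →L[ℂ] H))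
      (Q : Set (H →L[ℂ] H)) F F₁ F₂)
    (f : H →L[ℂ] H) (hf : IsProjectionIn (Q : Set (H →L[ℂ] H)) f)
    (hcf : ∀ z : H →L[ℂ] H, IsProjectionIn (Q : Set (H →L[ℂ] H)) z →
      (∀ y ∈ Q, z * y = y * z) → f * z = f → z = 1) :
    IsAFP (cornerSet f (P : Set (H →L[ℂ] H))) (cornerSet f (P₁ : Set (H →L[ℂ] H)))
      (cornerSet f (P₂ : Set (H →L[ℂ] H))) (cornerSet f (Q : Set (H →L[ℂ] H)))
      F F₁ F₂ := by
  obtain ⟨hQP₁, hQP₂, hP₁P, hP₂P, hgen, hF, hF₁, hF₂, hFF₁, hFF₂, hfree⟩ := hAFP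
  have hfP₁ := cornerSet_subset P₁ (hQP₁ hf.1)
  have hfP₂ := cornerSet_subset P₂ (hQP₂ hf.1)
  refine ⟨cornerSet_mono hQP₁, cornerSet_mono hQP₂, cornerSet_mono hP₁P, cornerSet_mono hP₂P,
    fun R h₁ h₂ => cornerSet_subset_of_cornerSet_subset hQP₁ hQP₂ hgen hf hcf h₁ h₂,
    hF.cornerSet hf.1, hF₁.cornerSet hf.1, hF₂.cornerSet hf.1,
    fun x hx => hFF₁ x (hfP₁ hx), fun x hx => hFF₂ x (hfP₂ hx),
    fun n x ε hn hx halt => hfree n x ε hn (fun i => ⟨?_, (hx i).2⟩) halt⟩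
  have hxi := (hx i).1
  split_ifs at hxi ⊢
  exacts [hfP₁ hxi, hfP₂ hxi]
end

section
/- Let M ⊇ N be von Neumann algebras with a faithful normal conditional expectation E : M → N, and suppose M₁, M₂ are intermediate subalgebras that are freely independent with amalgamation over N with respect to E, with E_k = E|_{M_k}. If x ∈ M₁ satisfies y(x − E₁(x)) = 0 for all y ∈ Ker(E₂) ∩ M₂, and there exists a family {y_i} in Ker(E₂)∩M₂ with Σ_i s(E₂(y_i* y_i)) = 1, then x = E₁(x) ∈ N. -/
/-!
Put `z = x - E x`, a centred element of `M₁`. For `y ∈ Ker E₂` we have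
`z* (y* y) z = (y z)* (y z) = 0`; after centring `y* y`, freeness kills `E` of the alternating
word `z* (y* y - E(y* y)) z`, leaving `E (z* E(y* y) z) = 0`. Faithfulness of `E` then gives
`E(y* y) z = 0`, so every support projection `s(E(yᵢ* yᵢ))` annihilates the range of `z`, and
since these projections sum to `1`, `z = 0`.
-/

open scoped ComplexOrder

variable {H : Type*} [NormedAddCommGroup H] [InnerProductSpace ℂ H] [CompleteSpace H]

/-- `s` is the support projection of the self-adjoint element `a` inside `Q`. -/
def IsSupportProjOf (Q : Set (H →L[ℂ] H)) (a s : H →L[ℂ] H) : Prop :=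
  IsProjectionIn Q s ∧ a * s = a ∧ ∀ ξ : H, a ξ = 0 → s ξ = 0

lemma mul_self_le_norm_smul_of_nonneg {A : Type*} [CStarAlgebra A] [PartialOrder A]
    [StarOrderedRing A] {b : A} (hb : 0 ≤ b) : b * b ≤ ‖b‖ • b := by
  obtain ⟨r, hr, rfl⟩ : ∃ r : A, IsSelfAdjoint r ∧ r * r = b :=
    ⟨CFC.sqrt b, (CFC.sqrt_nonneg b).isSelfAdjoint, CFC.sqrt_mul_sqrt_self b hb⟩
  have h := CStarAlgebra.star_left_conjugate_le_norm_smul (a := r) (b := r * r) hb.isSelfAdjoint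
  rw [hr.star_eq] at h
  simpa only [mul_assoc] using h

def IsFreelyIndependent {R : Type*} [Ring R] (E : R → R) (A B : Set R) : Prop :=
  ∀ (n : ℕ) (w : Fin n → R) (ε : Fin n → Bool), n ≠ 0 →
    (∀ i, w i ∈ (if ε i then A else B) ∧ E (w i) = 0) →
    (∀ (i : ℕ) (h : i + 1 < n), ε ⟨i, Nat.lt_of_succ_lt h⟩ ≠ ε ⟨i + 1, h⟩) →
    E (List.ofFn w).prod = 0

lemma IsFreelyIndependent.map_mul_mul_eq_zero {R : Type*} [Ring R] {E : R → R} {A B : Set R}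
    (hfree : IsFreelyIndependent E A B) {a c d : R}
    (ha : a ∈ A) (hEa : E a = 0) (hc : c ∈ B) (hEc : E c = 0) (hd : d ∈ A) (hEd : E d = 0) :
    E (a * c * d) = 0 := by
  have h := hfree 3 ![a, c, d] ![true, false, true] three_ne_zero
    (fun j => by fin_cases j <;> simpa using ⟨‹_›, ‹_›⟩)
    (fun j hj => by rcases (by omega : j = 0 ∨ j = 1) with rfl | rfl <;> simp)
  simpa [List.ofFn_succ, mul_assoc] using h

namespace IsCondExp

variable {P Q : Set (H →L[ℂ] H)} {E : (H →L[ℂ] H) → (H →L[ℂ] H)}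

lemma map_mem (hE : IsCondExp P Q E) {x : H →L[ℂ] H} (hx : x ∈ P) : E x ∈ Q := hE.2.1 x hx

lemma map_of_mem (hE : IsCondExp P Q E) {y : H →L[ℂ] H} (hy : y ∈ Q) : E y = y :=
  hE.2.2.1 y hy

lemma map_add (hE : IsCondExp P Q E) (u v : H →L[ℂ] H) : E (u + v) = E u + E v := hE.2.2.2.1 u v

lemma map_smul (hE : IsCondExp P Q E) (c : ℂ) (u : H →L[ℂ] H) : E (c • u) = c • E u :=
  hE.2.2.2.2.1 c u

lemma map_star (hE : IsCondExp P Q E) (x : H →L[ℂ] H) : E (star x) = star (E x) :=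
  hE.2.2.2.2.2.1 x

lemma map_nonneg (hE : IsCondExp P Q E) {x : H →L[ℂ] H} (hx : 0 ≤ x) : 0 ≤ E x :=
  hE.2.2.2.2.2.2.1 x hx

lemma eq_zero_of_map_star_mul_self (hE : IsCondExp P Q E) {x : H →L[ℂ] H} (hx : x ∈ P)
    (h : E (star x * x) = 0) : x = 0 :=
  hE.2.2.2.2.2.2.2.2 x hx h

lemma map_sub (hE : IsCondExp P Q E) (u v : H →L[ℂ] H) : E (u - v) = E u - E v := by
  rw [eq_sub_iff_add_eq, ← hE.map_add, sub_add_cancel]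

lemma map_zero (hE : IsCondExp P Q E) : E 0 = 0 := by
  simpa using hE.map_sub 0 0

lemma map_real_smul (hE : IsCondExp P Q E) (r : ℝ) (u : H →L[ℂ] H) :
    E (r • u) = r • E u := by
  rw [← smul_one_smul ℂ r u, hE.map_smul, smul_one_smul]

lemma monotone (hE : IsCondExp P Q E) : Monotone E := fun u v huv => by
  rw [← sub_nonneg, ← hE.map_sub]
  exact hE.map_nonneg (sub_nonneg.2 huv)

lemma map_sub_map_self (hE : IsCondExp P Q E) {x : H →L[ℂ] H} (hx : x ∈ P) :
    E (x - E x) = 0 := by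
  rw [hE.map_sub, hE.map_of_mem (hE.map_mem hx), sub_self]

-- `0 ≤ (b z)* (b z) ≤ ‖b‖ • z* b z`, so faithfulness applies to `b z`.
lemma mul_eq_zero_of_map_conj_eq_zero (hE : IsCondExp P Q E) {b z : H →L[ℂ] H}
    (hb : 0 ≤ b) (hbz : b * z ∈ P) (h : E (star z * b * z) = 0) : b * z = 0 := by
  have hconj : star (b * z) * (b * z) = star z * (b * b) * z := by
    rw [star_mul, hb.isSelfAdjoint.star_eq]; noncomm_ring
  refine hE.eq_zero_of_map_star_mul_self hbz
    (le_antisymm ?_ (hE.map_nonneg (star_mul_self_nonneg _)))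
  calc E (star (b * z) * (b * z)) ≤ E (star z * (‖b‖ • b) * z) := by
        rw [hconj]
        exact hE.monotone <|
          star_left_conjugate_le_conjugate (mul_self_le_norm_smul_of_nonneg hb) z
    _ = 0 := by rw [mul_smul_comm, smul_mul_assoc, hE.map_real_smul, h, smul_zero]

end IsCondExp

lemma IsSupportProjOf.apply_eq_zero {Q : Set (H →L[ℂ] H)} {a s z : H →L[ℂ] H}
    (hs : IsSupportProjOf Q a s) (haz : a * z = 0) (ξ : H) : s (z ξ) = 0 :=
  hs.2.2 _ (by simpa using congrArg (· ξ) haz)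

lemma eq_zero_of_mul_eq_zero_of_supportProj {Q : Set (H →L[ℂ] H)} {I : Type*}
    {a s : I → H →L[ℂ] H} (hs : ∀ i, IsSupportProjOf Q (a i) (s i))
    (hsum : ∀ ξ : H, (∀ i, s i ξ = 0) → ξ = 0) {z : H →L[ℂ] H}
    (haz : ∀ i, a i * z = 0) : z = 0 :=
  ContinuousLinearMap.ext fun ξ => hsum _ fun i => (hs i).apply_eq_zero (haz i) ξ

lemma map_star_mul_self_mul_eq_zero {M N M₁ M₂ : VonNeumannAlgebra H}
    {E : (H →L[ℂ] H) → (H →L[ℂ] H)}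
    (hNM₁ : (N : Set (H →L[ℂ] H)) ⊆ M₁) (hNM₂ : (N : Set (H →L[ℂ] H)) ⊆ M₂)
    (hM₁M : (M₁ : Set (H →L[ℂ] H)) ⊆ M) (hM₂M : (M₂ : Set (H →L[ℂ] H)) ⊆ M)
    (hE : IsCondExp M N E) (hfree : IsFreelyIndependent E M₁ M₂) {y z : H →L[ℂ] H}
    (hy : y ∈ M₂) (hz : z ∈ M₁) (hEz : E z = 0) (hyz : y * z = 0) :
    E (star y * y) * z = 0 := by
  set b := E (star y * y)
  have hyy : star y * y ∈ M₂ := mul_mem (star_mem hy) hy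
  have hb : b ∈ (N : Set (H →L[ℂ] H)) := hE.map_mem (hM₂M hyy)
  have hfree_term : E (star z * (star y * y - b) * z) = 0 :=
    hfree.map_mul_mul_eq_zero (star_mem hz) (by rw [hE.map_star, hEz, star_zero])
      (sub_mem hyy (hNM₂ hb)) (hE.map_sub_map_self (hM₂M hyy)) hz hEz
  have hsplit : star z * b * z = star (y * z) * (y * z) - star z * (star y * y - b) * z := by
    rw [star_mul]; noncomm_ring
  refine hE.mul_eq_zero_of_map_conj_eq_zero (hE.map_nonneg (star_mul_self_nonneg y))
    (hM₁M (mul_mem (hNM₁ hb) hz)) ?_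
  rw [hsplit, hE.map_sub, hfree_term, hyz, mul_zero, hE.map_zero, sub_zero]

/-- if `M₁`, `M₂` are freely independent over `N` with respect to `E`,
`x ∈ M₁` satisfies `y (x − E₁ x) = 0` for all `y ∈ Ker E₂ ∩ M₂`, and there is a family
`{y i}` in `Ker E₂ ∩ M₂` whose support projections `s(E₂(yᵢ* yᵢ))` sum to `1`, then
`x = E₁(x) ∈ N`. -/
theorem stmt11 (M N M₁ M₂ : VonNeumannAlgebra H) (E : (H →L[ℂ] H) → (H →L[ℂ] H))
    (hNM₁ : (N : Set (H →L[ℂ] H)) ⊆ (M₁ : Set (H →L[ℂ] H)))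
    (hNM₂ : (N : Set (H →L[ℂ] H)) ⊆ (M₂ : Set (H →L[ℂ] H)))
    (hM₁M : (M₁ : Set (H →L[ℂ] H)) ⊆ (M : Set (H →L[ℂ] H)))
    (hM₂M : (M₂ : Set (H →L[ℂ] H)) ⊆ (M : Set (H →L[ℂ] H)))
    (hE : IsCondExp (M : Set (H →L[ℂ] H)) (N : Set (H →L[ℂ] H)) E)
    -- free independence with amalgamation over `N` with respect to `E`
    (hfree : ∀ (n : ℕ) (w : Fin n → (H →L[ℂ] H)) (ε : Fin n → Bool), n ≠ 0 →
      (∀ i, w i ∈ (if ε i then (M₁ : Set (H →L[ℂ] H)) else (M₂ : Set (H →L[ℂ] H))) ∧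
        E (w i) = 0) →
      (∀ (i : ℕ) (h : i + 1 < n), ε ⟨i, Nat.lt_of_succ_lt h⟩ ≠ ε ⟨i + 1, h⟩) →
      E (List.ofFn w).prod = 0)
    (x : H →L[ℂ] H) (hx : x ∈ M₁)
    (hxy : ∀ y ∈ M₂, E y = 0 → y * (x - E x) = 0)
    (I : Type) (y s : I → H →L[ℂ] H)
    (hy : ∀ i, y i ∈ M₂ ∧ E (y i) = 0)
    (hs : ∀ i, IsSupportProjOf (N : Set (H →L[ℂ] H)) (E (star (y i) * y i)) (s i))
    (hssum : ∀ ξ : H, (∀ i, s i ξ = 0) → ξ = 0) :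
    x = E x ∧ x ∈ N := by
  have hEx : E x ∈ (N : Set (H →L[ℂ] H)) := hE.map_mem (hM₁M hx)
  have hEz : E (x - E x) = 0 := hE.map_sub_map_self (hM₁M hx)
  have hz : x - E x ∈ M₁ := sub_mem hx (hNM₁ hEx)
  have hz0 : x - E x = 0 := eq_zero_of_mul_eq_zero_of_supportProj hs hssum fun i =>
    map_star_mul_self_mul_eq_zero hNM₁ hNM₂ hM₁M hM₂M hE hfree (hy i).1 hz hEz
      (hxy _ (hy i).1 (hy i).2)
  have hxE : x = E x := sub_eq_zero.mp hz0
  exact ⟨hxE, by rw [hxE]; exact hEx⟩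
end

section
/- Let M be a von Neumann algebra, N ⊆ M a subalgebra, f ∈ N a projection with central support c_f^M = 1 in M, and let {v_i}_{i∈I} be partial isometries in N with Σ_i v_i* v_i = 1 and v_i v_i* ≤ f for all i. If z ∈ Z(N)^ω (the ultrapower of the center of N) satisfies that zf commutes with every element of fMf, then z commutes with every element of M; i.e., M'f ∩ Z(N)^ω f = (M' ∩ Z(N)^ω)f. -/
/-!
Write `eᵢ = vᵢ⋆vᵢ`, so that `Σ eᵢ = 1` strongly and `zₘ` commutes with every `vᵢ` and with `f`.
For `b ∈ M` with `b f = b`, each `eᵢ b = vᵢ⋆ (vᵢ b)` has `vᵢ b ∈ fMf`, so it asymptotically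
commutes with `z`; the remainder `c = (1 - Σ_{i ∈ s} eᵢ) b` is small only strongly, but
`c⋆c ∈ fMf` also asymptotically commutes with `z`, and `‖c u‖² ≤ ‖c⋆c u‖ ‖u‖` makes
`c (zₘ ξ)` small uniformly in `m`. A general `y ∈ M` is then the strong sum of the
`(y vⱼ⋆) vⱼ`, and `y vⱼ⋆` is of the previous form.
-/

open scoped ComplexOrder

variable {H : Type*} [NormedAddCommGroup H] [InnerProductSpace ℂ H] [CompleteSpace H]

open Filter Topology

lemma isStarProjection_star_mul_self_of_mul_star_mul {R : Type*} [Semiring R] [StarRing R]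
    {v : R} (hv : v * star v * v = v) : IsStarProjection (star v * v) where
  isIdempotentElem := by
    rw [IsIdempotentElem, mul_assoc, ← mul_assoc v, hv]
  isSelfAdjoint := by
    rw [IsSelfAdjoint, star_mul, star_star]

lemma tendsto_apply_zero_of_hasSum {α ι 𝕜 E F : Type*} [NontriviallyNormedField 𝕜]
    [NormedAddCommGroup E] [NormedSpace 𝕜 E] [NormedAddCommGroup F] [NormedSpace 𝕜 F]
    {l : Filter α} {T : α → E →L[𝕜] F} (hT : ∃ C, ∀ m, ‖T m‖ ≤ C) {g : ι → E} {ξ : E}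
    (hg : HasSum g ξ) (h : ∀ i, Tendsto (fun m => T m (g i)) l (𝓝 0)) :
    Tendsto (fun m => T m ξ) l (𝓝 0) := by
  have hequi : Equicontinuous ((↑) ∘ T) := (NormedSpace.equicontinuous_TFAE T).out 5 1 |>.mp hT
  have hclosed : IsClosed {x | Tendsto (fun m => T m x) l (𝓝 0)} :=
    hequi.isClosed_setOfPred_tendsto continuous_zero
  refine hclosed.mem_of_tendsto hg (Eventually.of_forall fun s => ?_)
  simpa using tendsto_finsetSum s fun i _ => h i

section Projections

variable {𝕜 E ι : Type*} [RCLike 𝕜] [NormedAddCommGroup E] [InnerProductSpace 𝕜 E]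
  [CompleteSpace E] {p : ι → E →L[𝕜] E}

lemma IsStarProjection.re_inner_apply_eq_norm_sq {q : E →L[𝕜] E} (hq : IsStarProjection q)
    (ξ : E) : RCLike.re (inner 𝕜 ξ (q ξ)) = ‖q ξ‖ ^ 2 := by
  have hqq : star q * q = q := by rw [hq.isSelfAdjoint.star_eq, hq.isIdempotentElem.eq]
  rw [ContinuousLinearMap.apply_norm_sq_eq_inner_adjoint_right,
    ← ContinuousLinearMap.star_eq_adjoint, ← ContinuousLinearMap.mul_def, hqq]

lemma IsStarProjection.mul_eq_zero_of_hasSum (hp : ∀ i, IsStarProjection (p i))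
    (hsum : ∀ ξ, HasSum (fun i => p i ξ) ξ) {i k : ι} (hik : i ≠ k) : p i * p k = 0 := by
  classical
  ext ζ
  set η := p k ζ
  have hη : p k η = η := congrArg (· ζ) (hp k).isIdempotentElem.eq
  have hnorms : HasSum (fun j => ‖p j η‖ ^ 2) (‖η‖ ^ 2) := by
    have := ((hsum η).mapL (innerSL 𝕜 η)).mapL RCLike.reCLM
    simp only [innerSL_apply_apply, RCLike.reCLM_apply, (hp _).re_inner_apply_eq_norm_sq,
      inner_self_eq_norm_sq] at this
    exact this
  have hpair := sum_le_hasSum {i, k} (fun _ _ => sq_nonneg _) hnorms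
  rw [Finset.sum_pair hik, hη] at hpair
  have : ‖p i η‖ = 0 := by nlinarith [norm_nonneg (p i η)]
  simpa [η] using this

lemma isStarProjection_sum_of_hasSum (hp : ∀ i, IsStarProjection (p i))
    (hsum : ∀ ξ, HasSum (fun i => p i ξ) ξ) (s : Finset ι) :
    IsStarProjection (∑ i ∈ s, p i) := by
  classical
  induction s using Finset.induction_on with
  | empty => simp [IsStarProjection.zero]
  | insert a s ha ih =>
    rw [Finset.sum_insert ha]
    refine (hp a).add ih ?_
    rw [Finset.mul_sum]
    exact Finset.sum_eq_zero fun i hi =>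
      IsStarProjection.mul_eq_zero_of_hasSum hp hsum (ne_of_mem_of_not_mem hi ha).symm

end Projections

section AsymptoticCommutant

variable {α 𝕜 E : Type*} [NontriviallyNormedField 𝕜] [NormedAddCommGroup E] [NormedSpace 𝕜 E]
  (l : Filter α) (z : α → E →L[𝕜] E)

/-- For `l = ω` and bounded `z`, the commutant of the ultrapower element `(z m)_ω`, with
convergence in the strong operator topology. -/
def asymptoticCommutant : Submodule 𝕜 (E →L[𝕜] E) where
  carrier := {x | ∀ ξ, Tendsto (fun m => (z m * x - x * z m) ξ) l (𝓝 0)}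
  add_mem' {x y} hx hy ξ := by
    simpa [mul_add, add_mul, add_sub_add_comm] using (hx ξ).add (hy ξ)
  zero_mem' ξ := by simpa using tendsto_const_nhds
  smul_mem' c x hx ξ := by
    simpa [← smul_sub] using (hx ξ).const_smul c

variable {l z}

lemma mul_mem_asymptoticCommutant_left {a x : E →L[𝕜] E} (ha : ∀ m, Commute (z m) a)
    (hx : x ∈ asymptoticCommutant l z) : a * x ∈ asymptoticCommutant l z := by
  intro ξ
  have hcomm : ∀ m, a * (z m * x - x * z m) = z m * (a * x) - a * x * z m := fun m => by
    rw [mul_sub, ← mul_assoc, ← (ha m).eq]; simp only [mul_assoc]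
  exact ((a.continuous.tendsto' 0 0 (map_zero a)).comp (hx ξ)).congr fun m => by
    simp [← hcomm m]

lemma mul_mem_asymptoticCommutant_right {a x : E →L[𝕜] E} (ha : ∀ m, Commute (z m) a)
    (hx : x ∈ asymptoticCommutant l z) : x * a ∈ asymptoticCommutant l z := by
  intro ξ
  have hcomm : ∀ m, (z m * x - x * z m) * a = z m * (x * a) - x * a * z m := fun m => by
    rw [sub_mul, mul_assoc x, (ha m).eq]; simp only [mul_assoc]
  exact (hx (a ξ)).congr fun m => by simp [← hcomm m]

lemma corner_mem_asymptoticCommutant {f y : E →L[𝕜] E} (hf : IsIdempotentElem f)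
    (hzf : ∀ m, Commute (z m) f) (h : f * y * f ∈ asymptoticCommutant l (fun m => z m * f)) :
    f * y * f ∈ asymptoticCommutant l z := by
  intro ξ
  have hff : ∀ x, f * (f * x) = f * x := fun x => by rw [← mul_assoc, hf.eq]
  refine (h ξ).congr fun m => ?_
  have hleft : z m * f * (f * y * f) = z m * (f * y * f) := by simp only [mul_assoc, hff]
  have hright : f * y * f * (z m * f) = f * y * f * z m := by
    rw [(hzf m).eq]; simp only [mul_assoc, hff]
  simp only [hleft, hright]

lemma mem_asymptoticCommutant_of_hasSum_right {ι : Type*} (hz : ∃ C, ∀ m, ‖z m‖ ≤ C)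
    {p : ι → E →L[𝕜] E} (hsum : ∀ ξ, HasSum (fun i => p i ξ) ξ) (hzp : ∀ m i, Commute (z m) (p i))
    {y : E →L[𝕜] E} (hyp : ∀ i, y * p i ∈ asymptoticCommutant l z) :
    y ∈ asymptoticCommutant l z := by
  intro ξ
  obtain ⟨C, hC⟩ := hz
  refine tendsto_apply_zero_of_hasSum ⟨C * ‖y‖ + ‖y‖ * C, fun m => ?_⟩ (hsum ξ) fun i => ?_
  · refine (norm_sub_le _ _).trans (add_le_add ?_ ?_) <;>
      refine (norm_mul_le _ _).trans ?_ <;> gcongr <;> exact hC m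
  · refine (hyp i ξ).congr fun m => ?_
    have hcomm : (z m * y - y * z m) * p i = z m * (y * p i) - y * p i * z m := by
      rw [sub_mul, mul_assoc y, (hzp m i).eq]; simp only [mul_assoc]
    exact (congrArg (· ξ) hcomm).symm

end AsymptoticCommutant

section Hilbert

variable {α 𝕜 E : Type*} [RCLike 𝕜] [NormedAddCommGroup E] [InnerProductSpace 𝕜 E]
  [CompleteSpace E] {l : Filter α} {z : α → E →L[𝕜] E}

lemma norm_mul_apply_sq_le (c w : E →L[𝕜] E) (ξ : E) :
    ‖(c * w) ξ‖ ^ 2 ≤ (‖w‖ * ‖(star c * c) ξ‖ + ‖(w * (star c * c) - star c * c * w) ξ‖) *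
      (‖w‖ * ‖ξ‖) := by
  have hcs : ‖c (w ξ)‖ ^ 2 ≤ ‖(star c * c) (w ξ)‖ * ‖w ξ‖ := by
    rw [ContinuousLinearMap.apply_norm_sq_eq_inner_adjoint_left,
      ← ContinuousLinearMap.star_eq_adjoint, ← ContinuousLinearMap.mul_def]
    exact (RCLike.re_le_norm _).trans (norm_inner_le_norm _ _)
  have hsplit :
      (star c * c) (w ξ) = w ((star c * c) ξ) - (w * (star c * c) - star c * c * w) ξ := by
    simp
  calc ‖(c * w) ξ‖ ^ 2 ≤ ‖(star c * c) (w ξ)‖ * ‖w ξ‖ := hcs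
    _ ≤ _ := by
      gcongr
      · rw [hsplit]
        exact (norm_sub_le _ _).trans (add_le_add (w.le_opNorm _) le_rfl)
      · exact w.le_opNorm _

/-- Since `c ξ → 0` only pointwise, `c (z m ξ)` is not small uniformly in `m` by itself; it is
controlled through `norm_mul_apply_sq_le` by the asymptotic commutation of `star c * c`. -/
lemma mem_asymptoticCommutant_of_approx (hz : ∃ C, ∀ m, ‖z m‖ ≤ C) {b : E →L[𝕜] E}
    (happrox : ∀ ξ : E, ∀ δ > 0, ∃ c : E →L[𝕜] E, b - c ∈ asymptoticCommutant l z ∧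
      star c * c ∈ asymptoticCommutant l z ∧ ‖c ξ‖ < δ ∧ ‖(star c * c) ξ‖ < δ) :
    b ∈ asymptoticCommutant l z := by
  obtain ⟨C, hC⟩ := hz
  set K := max C 0
  have hK : ∀ m, ‖z m‖ ≤ K := fun m => (hC m).trans (le_max_left _ _)
  intro ξ
  refine NormedAddGroup.tendsto_nhds_zero.mpr fun ε hε => ?_
  obtain ⟨δ, ⟨hKδ, hKδξ⟩, hδ⟩ : ∃ δ : ℝ, (K * δ < ε / 3 ∧ (K * δ + δ) * (K * ‖ξ‖) < (ε / 3) ^ 2)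
      ∧ 0 < δ := by
    refine Eventually.exists (f := 𝓝[>] 0) (Eventually.and ?_ self_mem_nhdsWithin)
    refine Eventually.filter_mono nhdsWithin_le_nhds (Eventually.and ?_ ?_)
    · exact ((by fun_prop : Continuous fun δ : ℝ => K * δ).tendsto' 0 0
        (by simp)).eventually_lt_const (by positivity)
    · exact ((by fun_prop : Continuous fun δ : ℝ => (K * δ + δ) * (K * ‖ξ‖)).tendsto' 0 0
        (by simp)).eventually_lt_const (by positivity)
  obtain ⟨c, hbc, hcc, hcξ, hccξ⟩ := happrox ξ δ hδ
  filter_upwards [NormedAddGroup.tendsto_nhds_zero.mp (hbc ξ) (ε / 3) (by positivity),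
    NormedAddGroup.tendsto_nhds_zero.mp (hcc ξ) δ hδ] with m hbcm hccm
  have hsplit : (z m * b - b * z m) ξ =
      (z m * (b - c) - (b - c) * z m) ξ + ((z m * c) ξ - (c * z m) ξ) := by
    simp only [mul_sub, sub_mul, sub_apply]
    abel
  have hzc : ‖(z m * c) ξ‖ < ε / 3 :=
    ((z m).le_opNorm (c ξ)).trans_lt <| lt_of_le_of_lt (by gcongr; exact hK m) hKδ
  have hcz : ‖(c * z m) ξ‖ < ε / 3 := by
    refine lt_of_pow_lt_pow_left₀ 2 (by positivity) ((norm_mul_apply_sq_le c (z m) ξ).trans_lt ?_)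
    refine lt_of_le_of_lt ?_ hKδξ
    gcongr <;> exact hK m
  calc ‖(z m * b - b * z m) ξ‖
        ≤ ‖(z m * (b - c) - (b - c) * z m) ξ‖ + (‖(z m * c) ξ‖ + ‖(c * z m) ξ‖) := by
        rw [hsplit]; exact (norm_add_le _ _).trans (add_le_add le_rfl (norm_sub_le _ _))
    _ < ε := by linarith

lemma mem_asymptoticCommutant_of_hasSum_left {ι : Type*} (hz : ∃ C, ∀ m, ‖z m‖ ≤ C)
    {p : ι → E →L[𝕜] E} (hp : ∀ i, IsStarProjection (p i)) (hsum : ∀ ξ, HasSum (fun i => p i ξ) ξ)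
    {b : E →L[𝕜] E} (hpb : ∀ i, p i * b ∈ asymptoticCommutant l z)
    (htail : ∀ s : Finset ι, star b * (1 - ∑ i ∈ s, p i) * b ∈ asymptoticCommutant l z) :
    b ∈ asymptoticCommutant l z := by
  refine mem_asymptoticCommutant_of_approx hz fun ξ δ hδ => ?_
  obtain ⟨s, hs⟩ : ∃ s : Finset ι, ‖b ξ - ∑ i ∈ s, p i (b ξ)‖ < δ / (‖b‖ + 1) := by
    obtain ⟨s, hs⟩ := (Metric.tendsto_nhds.mp (hsum (b ξ)) (δ / (‖b‖ + 1)) (by positivity)).exists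
    exact ⟨s, by rwa [dist_eq_norm, norm_sub_rev] at hs⟩
  set Q := 1 - ∑ i ∈ s, p i
  have hQ : IsStarProjection Q := (isStarProjection_sum_of_hasSum hp hsum s).one_sub
  have hQb : ‖(Q * b) ξ‖ < δ / (‖b‖ + 1) := by simpa [Q, sub_mul] using hs
  have hcc : star (Q * b) * (Q * b) = star b * Q * b := by
    rw [star_mul, hQ.isSelfAdjoint.star_eq, mul_assoc, ← mul_assoc Q, hQ.isIdempotentElem.eq,
      ← mul_assoc]
  have hδb : ‖b‖ * (δ / (‖b‖ + 1)) < δ := by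
    rw [← mul_div_assoc, div_lt_iff₀ (by positivity)]
    nlinarith
  refine ⟨Q * b, ?_, hcc ▸ htail s, hQb.trans_le (div_le_self hδ.le (by simp)), ?_⟩
  · have hPb : b - Q * b = ∑ i ∈ s, p i * b := by simp [Q, sub_mul, Finset.sum_mul]
    exact hPb ▸ Submodule.sum_mem _ fun i _ => hpb i
  · calc ‖(star (Q * b) * (Q * b)) ξ‖ = ‖star b ((Q * b) ξ)‖ := by rw [hcc, mul_assoc]; rfl
      _ ≤ ‖star b‖ * ‖(Q * b) ξ‖ := (star b).le_opNorm _
      _ ≤ ‖b‖ * (δ / (‖b‖ + 1)) := by rw [norm_star b]; gcongr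
      _ < δ := hδb

lemma mem_asymptoticCommutant_of_mul_eq_self {ι : Type*} {M : StarSubalgebra 𝕜 (E →L[𝕜] E)}
    (hz : ∃ C, ∀ m, ‖z m‖ ≤ C) {f : E →L[𝕜] E} (hf : IsSelfAdjoint f)
    (hcorner : ∀ x ∈ M, f * x * f ∈ asymptoticCommutant l z) {v : ι → E →L[𝕜] E}
    (hvM : ∀ i, v i ∈ M) (hvpi : ∀ i, v i * star (v i) * v i = v i) (hfv : ∀ i, f * v i = v i)
    (hvsum : ∀ ξ, HasSum (fun i => (star (v i) * v i) ξ) ξ)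
    (hzv : ∀ m i, Commute (z m) (star (v i))) {b : E →L[𝕜] E} (hb : b ∈ M) (hbf : b * f = b) :
    b ∈ asymptoticCommutant l z := by
  refine mem_asymptoticCommutant_of_hasSum_left hz
    (fun i => isStarProjection_star_mul_self_of_mul_star_mul (hvpi i)) hvsum (fun i => ?_)
    (fun s => ?_)
  · have hvb : f * (v i * b) * f = v i * b := by rw [← mul_assoc, hfv, mul_assoc, hbf]
    rw [mul_assoc]
    exact mul_mem_asymptoticCommutant_left (hzv · i) (hvb ▸ hcorner _ (mul_mem (hvM i) hb))
  · set Q := 1 - ∑ i ∈ s, star (v i) * v i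
    have hQ : Q ∈ M := sub_mem (one_mem M) (sum_mem fun i _ => mul_mem (star_mem (hvM i)) (hvM i))
    have hfb : f * star b = star b := by simpa [hf.star_eq] using congrArg star hbf
    have hQb : f * (star b * Q * b) * f = star b * Q * b := by
      calc f * (star b * Q * b) * f = f * star b * Q * (b * f) := by simp only [mul_assoc]
        _ = star b * Q * b := by rw [hfb, hbf]
    exact hQb ▸ hcorner _ (mul_mem (mul_mem (star_mem hb) hQ) hb)

end Hilbert

theorem stmt18_general (M N : VonNeumannAlgebra H)
    (hNM : (N : Set (H →L[ℂ] H)) ⊆ (M : Set (H →L[ℂ] H)))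
    (f : H →L[ℂ] H) (hf : IsProjectionIn (N : Set (H →L[ℂ] H)) f)
    (I : Type) (v : I → (H →L[ℂ] H)) (hvN : ∀ i, v i ∈ N)
    (hvpi : ∀ i, v i * star (v i) * v i = v i)
    (hvf : ∀ i, f * (v i * star (v i)) = v i * star (v i))
    (hvsum : ∀ ξ : H, HasSum (fun i => (star (v i) * v i) ξ) ξ)
    (ω : Ultrafilter ℕ) (z : ℕ → (H →L[ℂ] H))
    (hzN : ∀ m, z m ∈ N ∧ ∀ y ∈ N, z m * y = y * z m)
    (hzb : ∃ C : ℝ, ∀ m, ‖z m‖ ≤ C)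
    (hcomm : ∀ y ∈ M, ∀ ξ : H,
      Filter.Tendsto (fun m => ((z m * f) * (f * y * f) - (f * y * f) * (z m * f)) ξ)
        (↑ω) (nhds 0)) :
    ∀ y ∈ M, ∀ ξ : H,
      Filter.Tendsto (fun m => ((z m * y - y * z m)) ξ) (↑ω) (nhds 0) := by
  obtain ⟨hfN, hff, hfsa⟩ := hf
  have hzc : ∀ m, ∀ x ∈ N, Commute (z m) x := fun m => (hzN m).2
  have hfv : ∀ i, f * v i = v i := fun i => by
    rw [← hvpi, ← mul_assoc, hvf]
  have hvstar : ∀ i, star (v i) * f = star (v i) := fun i => by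
    simpa [hfsa.star_eq] using congrArg star (hfv i)
  have hcorner : ∀ x ∈ M, f * x * f ∈ asymptoticCommutant ω z := fun x hx =>
    corner_mem_asymptoticCommutant hff (fun m => hzc m f hfN) (hcomm x hx)
  intro y hy
  refine mem_asymptoticCommutant_of_hasSum_right hzb hvsum
    (fun m j => hzc m _ (mul_mem (star_mem (hvN j)) (hvN j))) fun j => ?_
  rw [← mul_assoc]
  refine mul_mem_asymptoticCommutant_right (fun m => hzc m _ (hvN j)) ?_
  exact mem_asymptoticCommutant_of_mul_eq_self (M := M.toStarSubalgebra) hzb hfsa hcorner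
    (fun i => hNM (hvN i)) hvpi hfv hvsum (fun m i => hzc m _ (star_mem (hvN i)))
    (mul_mem hy (star_mem (hNM (hvN j)))) (by rw [mul_assoc, hvstar])

/-- with `f ∈ N` of central support `1` in `M` and partial isometries
`{v i} ⊆ N` with `Σ vᵢ* vᵢ = 1`, `vᵢvᵢ* ≤ f`, any `z ∈ Z(N)^ω` such that `zf` commutes
with `fMf` (in the ultrapower, along the free ultrafilter `ω`) commutes with all of
`M`; i.e. `M'f ∩ Z(N)^ω f = (M' ∩ Z(N)^ω) f`. -/
theorem stmt18 (M N : VonNeumannAlgebra H)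
    (hNM : (N : Set (H →L[ℂ] H)) ⊆ (M : Set (H →L[ℂ] H)))
    (f : H →L[ℂ] H) (hf : IsProjectionIn (N : Set (H →L[ℂ] H)) f)
    (hcfM : ∀ z : H →L[ℂ] H, IsProjectionIn (M : Set (H →L[ℂ] H)) z →
      (∀ y ∈ M, z * y = y * z) → f * z = f → z = 1)
    (I : Type) (v : I → (H →L[ℂ] H)) (hvN : ∀ i, v i ∈ N)
    (hvpi : ∀ i, v i * star (v i) * v i = v i)
    (hvf : ∀ i, f * (v i * star (v i)) = v i * star (v i))
    (hvsum : ∀ ξ : H, HasSum (fun i => (star (v i) * v i) ξ) ξ)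
    (ω : Ultrafilter ℕ) (z : ℕ → (H →L[ℂ] H))
    (hzN : ∀ m, z m ∈ N ∧ ∀ y ∈ N, z m * y = y * z m)
    (hzb : ∃ C : ℝ, ∀ m, ‖z m‖ ≤ C)
    (hcomm : ∀ y ∈ M, ∀ ξ : H,
      Filter.Tendsto (fun m => ((z m * f) * (f * y * f) - (f * y * f) * (z m * f)) ξ)
        (↑ω) (nhds 0)) :
    ∀ y ∈ M, ∀ ξ : H,
      Filter.Tendsto (fun m => ((z m * y - y * z m)) ξ) (↑ω) (nhds 0) :=
  stmt18_general M N hNM f hf I v hvN hvpi hvf hvsum ω z hzN hzb hcomm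
end
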